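/- arXiv:1901.11158 — 4 statements merged into one kernel-verified Lean document; each statement's English description precedes it below -/
import Mathlib

section
/- Let A ∈ ℝ^{m×n} and v ∈ ℝⁿ. Assume the source condition holds: there exists w ∈ ℝ^m such that (Aᵀw)_i = sign(v_i) for every i ∈ supp(v) and |(Aᵀw)_i| < 1 for every i ∉ supp(v). Assume further that A restricted to the subspace spanned by the standard basis vectors e_i with i ∈ supp(v) is injective. Then for all constants 0 < c₁ ≤ c₂ there exists a constant C > 0 such that for every δ > 0, every λ ∈ [c₁δ, c₂δ], every g^δ ∈ ℝ^m with ‖Av − g^δ‖₂ ≤ δ, and every minimizer v_λ^δ of the ℓ¹-Tikhonov functional z ↦ (1/2)‖Az − g^δ‖₂² + λ‖z‖₁ over ℝⁿ, one has ‖v_λ^δ − v‖₂ ≤ Cδ. -/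
/-!
The source element `w` makes `η = Aᵀ w` a subgradient of `‖·‖₁` at `v`, so the Bregman distance
`D(u) = ‖u‖₁ - ⟪η, u⟫` is nonnegative, and since `|ηᵢ| ≤ 1 - θ` off the support of `v` for some
`θ > 0`, it dominates `θ` times the ℓ¹ mass of `u` there. Comparing the Tikhonov functional at a minimiser `u` with its
value at `v`, and writing `⟪η, v - u⟫ = ⟪w, A(v - u)⟫`, gives
`½‖Au - g‖² + λ D(u) ≤ ½δ² + λ‖w‖(δ + ‖Au - g‖)`, so for `λ ≍ δ` both the residual and `D(u)`
are `O(δ)`. Restricted injectivity bounds `‖z‖₂` by `‖Az‖₂` plus the ℓ¹ mass of `z` off the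
support; applied to `z = u - v` this gives the linear rate.
-/

open Matrix

/-- The Euclidean (ℓ²) norm on `Fin k → ℝ`. -/
noncomputable def l2norm {k : ℕ} (x : Fin k → ℝ) : ℝ := Real.sqrt (∑ i, x i ^ 2)

/-- The ℓ¹ norm on `Fin k → ℝ`. -/
noncomputable def l1norm {k : ℕ} (x : Fin k → ℝ) : ℝ := ∑ i, |x i|

open Finset

theorem LinearMap.exists_norm_le_mul_add_of_ker_inf_eq_bot {𝕜 E F G : Type*}
    [NontriviallyNormedField 𝕜] [CompleteSpace 𝕜]
    [NormedAddCommGroup E] [NormedSpace 𝕜 E] [FiniteDimensional 𝕜 E]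
    [NormedAddCommGroup F] [NormedSpace 𝕜 F] [NormedAddCommGroup G] [NormedSpace 𝕜 G]
    (f : E →ₗ[𝕜] F) (g : E →ₗ[𝕜] G) (h : ker f ⊓ ker g = ⊥) :
    ∃ K > (0 : ℝ), ∀ x, ‖x‖ ≤ K * (‖f x‖ + ‖g x‖) := by
  obtain ⟨K, hK, hanti⟩ := (f.prod g).exists_antilipschitzWith (by rwa [ker_prod])
  refine ⟨K, hK, fun x => (ZeroHomClass.bound_of_antilipschitz _ hanti x).trans ?_⟩
  gcongr
  exact max_le_add_of_nonneg (norm_nonneg _) (norm_nonneg _)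

lemma Real.abs_sign_of_ne_zero {r : ℝ} (hr : r ≠ 0) : |Real.sign r| = 1 := by
  rcases Real.sign_apply_eq_of_ne_zero r hr with h | h <;> simp [h]

lemma Real.sign_mul_self_eq_abs (r : ℝ) : Real.sign r * r = |r| := by
  rcases lt_trichotomy r 0 with h | rfl | h
  · rw [Real.sign_of_neg h, abs_of_neg h, neg_one_mul]
  · simp
  · rw [Real.sign_of_pos h, abs_of_pos h, one_mul]

lemma exists_pos_forall_le_of_pos {ι : Type*} [Finite ι] {p : ι → Prop} {f : ι → ℝ}
    (hf : ∀ i, p i → 0 < f i) : ∃ θ > 0, ∀ i, p i → θ ≤ f i := by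
  have : ∀ᶠ θ in nhdsWithin 0 (Set.Ioi 0), ∀ i, p i → θ ≤ f i :=
    Filter.eventually_all.2 fun i => Filter.eventually_imp_distrib_left.2 fun hi =>
      (eventually_le_nhds (hf i hi)).filter_mono nhdsWithin_le_nhds
  obtain ⟨θ, hθf, hθ⟩ := (this.and self_mem_nhdsWithin).exists
  exact ⟨θ, hθ, hθf⟩

section Norms

variable {k : ℕ}

lemma l2norm_eq_norm (x : Fin k → ℝ) :
    l2norm x = ‖(WithLp.toLp 2 x : EuclideanSpace ℝ (Fin k))‖ := by
  simp [EuclideanSpace.norm_eq, l2norm]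

lemma l2norm_nonneg (x : Fin k → ℝ) : 0 ≤ l2norm x := Real.sqrt_nonneg _

lemma l2norm_neg (x : Fin k → ℝ) : l2norm (-x) = l2norm x := by
  simp [l2norm]

lemma l2norm_sub_le_sub_add_sub (x y z : Fin k → ℝ) :
    l2norm (x - y) ≤ l2norm (x - z) + l2norm (y - z) := by
  simpa only [l2norm_eq_norm, WithLp.toLp_sub, ← dist_eq_norm] using
    dist_triangle_right (WithLp.toLp 2 x : EuclideanSpace ℝ (Fin k)) (WithLp.toLp 2 y)
      (WithLp.toLp 2 z)

lemma l2norm_le_l1norm (x : Fin k → ℝ) : l2norm x ≤ l1norm x := by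
  refine Real.sqrt_le_iff.2 ⟨sum_nonneg fun i _ => abs_nonneg _, ?_⟩
  simpa only [l1norm, sq_abs] using
    sum_sq_le_sq_sum_of_nonneg (s := univ) fun i _ => abs_nonneg (x i)

lemma dotProduct_le_l2norm_mul (x y : Fin k → ℝ) : x ⬝ᵥ y ≤ l2norm x * l2norm y := by
  simpa [l2norm_eq_norm, EuclideanSpace.inner_toLp_toLp, dotProduct_comm] using
    real_inner_le_norm (WithLp.toLp 2 x : EuclideanSpace ℝ (Fin k)) (WithLp.toLp 2 y)

end Norms

section SourceCondition

variable {n : ℕ} {η v : Fin n → ℝ}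

lemma dotProduct_eq_l1norm_of_eq_sign (hsupp : ∀ i, v i ≠ 0 → η i = Real.sign (v i)) :
    η ⬝ᵥ v = l1norm v :=
  sum_congr rfl fun i _ => by
    by_cases hvi : v i = 0
    · simp [hvi]
    · rw [hsupp i hvi, Real.sign_mul_self_eq_abs]

lemma abs_le_one_of_eq_sign (hsupp : ∀ i, v i ≠ 0 → η i = Real.sign (v i))
    (hoff : ∀ i, v i = 0 → |η i| < 1) (i : Fin n) : |η i| ≤ 1 := by
  by_cases hvi : v i = 0
  · exact (hoff i hvi).le
  · rw [hsupp i hvi, Real.abs_sign_of_ne_zero hvi]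

lemma mul_sum_abs_le_l1norm_sub_dotProduct {u : Fin n → ℝ} {s : Finset (Fin n)} {θ : ℝ}
    (hη : ∀ i, |η i| ≤ 1) (hθ : ∀ i ∈ s, θ ≤ 1 - |η i|) :
    θ * ∑ i ∈ s, |u i| ≤ l1norm u - η ⬝ᵥ u := by
  have hmul : ∀ i, η i * u i ≤ |η i| * |u i| := fun i => abs_mul (η i) (u i) ▸ le_abs_self _
  calc θ * ∑ i ∈ s, |u i| ≤ ∑ i ∈ s, (|u i| - η i * u i) := by
        rw [mul_sum]
        refine sum_le_sum fun i hi => ?_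
        nlinarith [hmul i, hθ i hi, abs_nonneg (u i)]
    _ ≤ ∑ i, (|u i| - η i * u i) :=
        sum_le_sum_of_subset_of_nonneg (subset_univ _) fun i _ _ => by
          nlinarith [hmul i, hη i, abs_nonneg (u i)]
    _ = l1norm u - η ⬝ᵥ u := by rw [sum_sub_distrib]; rfl

end SourceCondition

lemma exists_l2norm_le_mul_add_of_injOn_support {m n : ℕ} (A : Matrix (Fin m) (Fin n) ℝ)
    (v : Fin n → ℝ)
    (hinj : ∀ z₁ z₂ : Fin n → ℝ, (∀ i, v i = 0 → z₁ i = 0) →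
      (∀ i, v i = 0 → z₂ i = 0) → A *ᵥ z₁ = A *ᵥ z₂ → z₁ = z₂) :
    ∃ K > (0 : ℝ), ∀ z : Fin n → ℝ,
      l2norm z ≤ K * (l2norm (A *ᵥ z) + ∑ i with v i = 0, |z i|) := by
  classical
  -- `diagonal d` keeps exactly the coordinates off the support of `v`
  let d : Fin n → ℝ := fun i => if v i = 0 then 1 else 0
  have hker : LinearMap.ker (toLpLin 2 2 A) ⊓ LinearMap.ker (toLpLin 2 2 (diagonal d)) = ⊥ := by
    refine eq_bot_iff.2 fun z ⟨hAz, hdz⟩ => ?_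
    simp only [SetLike.mem_coe, LinearMap.mem_ker, toLpLin_apply, WithLp.toLp_eq_zero] at hAz hdz
    have hsupp : ∀ i, v i = 0 → z i = 0 := fun i hi => by
      simpa [d, mulVec_diagonal, hi] using congrFun hdz i
    have hz : WithLp.ofLp z = 0 := hinj _ 0 hsupp (fun _ _ => rfl) (by rw [hAz, mulVec_zero])
    simpa using congrArg (WithLp.toLp 2) hz
  obtain ⟨K, hK, hbound⟩ := LinearMap.exists_norm_le_mul_add_of_ker_inf_eq_bot _ _ hker
  refine ⟨K, hK, fun z => ?_⟩
  have hoff : l2norm (diagonal d *ᵥ z) ≤ ∑ i with v i = 0, |z i| :=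
    (l2norm_le_l1norm _).trans_eq (by simp [l1norm, d, mulVec_diagonal, sum_filter, apply_ite])
  have := hbound (WithLp.toLp 2 z)
  simp only [toLpLin_toLp, toLin'_apply, ← l2norm_eq_norm] at this
  exact this.trans (by gcongr)

lemma tikhonov_energy_le {m n : ℕ} {A : Matrix (Fin m) (Fin n) ℝ} {w g : Fin m → ℝ}
    {u v : Fin n → ℝ} {δ lam : ℝ} (hv : (Aᵀ *ᵥ w) ⬝ᵥ v = l1norm v) (hlam : 0 ≤ lam)
    (hg : l2norm (A *ᵥ v - g) ≤ δ)
    (hu : 1 / 2 * l2norm (A *ᵥ u - g) ^ 2 + lam * l1norm u ≤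
      1 / 2 * l2norm (A *ᵥ v - g) ^ 2 + lam * l1norm v) :
    1 / 2 * l2norm (A *ᵥ u - g) ^ 2 + lam * (l1norm u - (Aᵀ *ᵥ w) ⬝ᵥ u) ≤
      1 / 2 * δ ^ 2 + lam * (l2norm w * (δ + l2norm (A *ᵥ u - g))) := by
  have hsplit : (Aᵀ *ᵥ w) ⬝ᵥ u =
      l1norm v - w ⬝ᵥ (A *ᵥ v - g) - (-w) ⬝ᵥ (A *ᵥ u - g) := by
    simp only [← hv, mulVec_transpose, ← dotProduct_mulVec, dotProduct_sub, neg_dotProduct]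
    ring
  have hpair : w ⬝ᵥ (A *ᵥ v - g) + (-w) ⬝ᵥ (A *ᵥ u - g) ≤
      l2norm w * (δ + l2norm (A *ᵥ u - g)) := by
    have h₁ := dotProduct_le_l2norm_mul w (A *ᵥ v - g)
    have h₂ := dotProduct_le_l2norm_mul (-w) (A *ᵥ u - g)
    rw [l2norm_neg] at h₂
    nlinarith [l2norm_nonneg w]
  have hδ : l2norm (A *ᵥ v - g) ^ 2 ≤ δ ^ 2 := pow_le_pow_left₀ (l2norm_nonneg _) hg 2
  rw [hsplit]
  nlinarith [mul_le_mul_of_nonneg_left hpair hlam]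

lemma residual_le_and_bregman_le {t D δ lam W c₁ c₂ : ℝ} (hδ : 0 < δ) (hc₁ : 0 < c₁)
    (hlam₁ : c₁ * δ ≤ lam) (hlam₂ : lam ≤ c₂ * δ) (hW : 0 ≤ W) (hD : 0 ≤ D)
    (h : 1 / 2 * t ^ 2 + lam * D ≤ 1 / 2 * δ ^ 2 + lam * (W * (δ + t))) :
    t ≤ (1 + 2 * c₂ * W) * δ ∧ D ≤ (1 / (2 * c₁) + W * (2 + 2 * c₂ * W)) * δ := by
  have hlam : 0 < lam := (mul_pos hc₁ hδ).trans_le hlam₁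
  have ht' : t ≤ δ + 2 * lam * W := by
    by_contra! hlt
    -- `h` gives `(t - δ)(t + δ) ≤ 2λW(t + δ)`, and here `t + δ > 0`
    nlinarith [mul_nonneg hlam.le hD, mul_nonneg hlam.le hW]
  have hres : t ≤ (1 + 2 * c₂ * W) * δ := by nlinarith [mul_le_mul_of_nonneg_right hlam₂ hW]
  refine ⟨hres, le_of_mul_le_mul_left ?_ hlam⟩
  have hδsq : 1 / 2 * δ ^ 2 ≤ lam * (1 / (2 * c₁) * δ) := by
    have := mul_le_mul_of_nonneg_right hlam₁ (by positivity : 0 ≤ 1 / (2 * c₁) * δ)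
    field_simp at this ⊢
    linarith
  nlinarith [mul_le_mul_of_nonneg_left (show δ + t ≤ (2 + 2 * c₂ * W) * δ by linarith)
    (mul_nonneg hlam.le hW)]

/-- Linear convergence rates for ℓ¹-Tikhonov regularization under the source condition
and restricted injectivity. -/
theorem stmt0 {m n : ℕ} (A : Matrix (Fin m) (Fin n) ℝ) (v : Fin n → ℝ)
    (hsource : ∃ w : Fin m → ℝ,
      (∀ i, v i ≠ 0 → (Aᵀ *ᵥ w) i = Real.sign (v i)) ∧
      (∀ i, v i = 0 → |(Aᵀ *ᵥ w) i| < 1))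
    (hinj : ∀ z₁ z₂ : Fin n → ℝ, (∀ i, v i = 0 → z₁ i = 0) →
      (∀ i, v i = 0 → z₂ i = 0) → A *ᵥ z₁ = A *ᵥ z₂ → z₁ = z₂) :
    ∀ c₁ c₂ : ℝ, 0 < c₁ → c₁ ≤ c₂ →
      ∃ C > (0 : ℝ), ∀ δ > (0 : ℝ), ∀ lam : ℝ, c₁ * δ ≤ lam → lam ≤ c₂ * δ →
        ∀ gδ : Fin m → ℝ, l2norm (A *ᵥ v - gδ) ≤ δ →
          ∀ vlam : Fin n → ℝ,
            (∀ z : Fin n → ℝ,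
              (1 / 2) * l2norm (A *ᵥ vlam - gδ) ^ 2 + lam * l1norm vlam ≤
                (1 / 2) * l2norm (A *ᵥ z - gδ) ^ 2 + lam * l1norm z) →
            l2norm (vlam - v) ≤ C * δ := by
  obtain ⟨w, hw_supp, hw_off⟩ := hsource
  have hη := abs_le_one_of_eq_sign hw_supp hw_off
  obtain ⟨θ, hθ, hθη⟩ := exists_pos_forall_le_of_pos fun i hi => sub_pos.2 (hw_off i hi)
  obtain ⟨K, hK, hstab⟩ := exists_l2norm_le_mul_add_of_injOn_support A v hinj
  intro c₁ c₂ hc₁ hc₁₂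
  have hW := l2norm_nonneg w
  set K₁ := 1 + 2 * c₂ * l2norm w
  set K₂ := 1 / (2 * c₁) + l2norm w * (2 + 2 * c₂ * l2norm w)
  have hK₁ : 0 ≤ K₁ := by nlinarith [mul_nonneg (hc₁.le.trans hc₁₂) hW]
  have hK₂ : 0 < K₂ := add_pos_of_pos_of_nonneg (by positivity) (mul_nonneg hW (by linarith))
  refine ⟨K * (K₁ + 1 + K₂ / θ), by positivity, ?_⟩
  intro δ hδ lam hlam₁ hlam₂ g hg u hu
  have hoff : θ * ∑ i with v i = 0, |u i| ≤ l1norm u - (Aᵀ *ᵥ w) ⬝ᵥ u :=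
    mul_sum_abs_le_l1norm_sub_dotProduct hη fun i hi => hθη i (mem_filter.1 hi).2
  obtain ⟨hres, hbreg⟩ := residual_le_and_bregman_le hδ hc₁ hlam₁ hlam₂ hW
    ((mul_nonneg hθ.le (sum_nonneg fun _ _ => abs_nonneg _)).trans hoff)
    (tikhonov_energy_le (dotProduct_eq_l1norm_of_eq_sign hw_supp) (by nlinarith) hg (hu v))
  have hsum : ∑ i with v i = 0, |(u - v) i| = ∑ i with v i = 0, |u i| :=
    sum_congr rfl fun i hi => by rw [Pi.sub_apply, (mem_filter.1 hi).2, sub_zero]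
  calc l2norm (u - v) ≤ K * (l2norm (A *ᵥ (u - v)) + ∑ i with v i = 0, |u i|) :=
        hsum ▸ hstab (u - v)
    _ ≤ K * ((K₁ + 1) * δ + K₂ * δ / θ) := by
        gcongr
        · linarith [mulVec_sub A u v ▸ l2norm_sub_le_sub_add_sub (A *ᵥ u) (A *ᵥ v) g]
        · exact (le_div_iff₀' hθ).2 (hoff.trans hbreg)
    _ = K * (K₁ + 1 + K₂ / θ) * δ := by ring
end

section
/- Let A ∈ ℝ^{m×n} and v ∈ ℝⁿ. Assume the source condition holds: there exists w ∈ ℝ^m such that (Aᵀw)_i = sign(v_i) for every i ∈ supp(v) and |(Aᵀw)_i| < 1 for every i ∉ supp(v). Assume further that A restricted to the subspace spanned by the standard basis vectors e_i with i ∈ supp(v) is injective. Then v is the unique minimizer of ‖z‖₁ over all z ∈ ℝⁿ satisfying Az = Av. -/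
open Matrix

/-- Under the source condition and restricted injectivity, `v` is the unique
ℓ¹-minimizer among all solutions of `A z = A v`. -/
theorem stmt1 {m n : ℕ} (A : Matrix (Fin m) (Fin n) ℝ) (v : Fin n → ℝ)
    (hsource : ∃ w : Fin m → ℝ,
      (∀ i, v i ≠ 0 → (Aᵀ *ᵥ w) i = Real.sign (v i)) ∧
      (∀ i, v i = 0 → |(Aᵀ *ᵥ w) i| < 1))
    (hinj : ∀ z₁ z₂ : Fin n → ℝ, (∀ i, v i = 0 → z₁ i = 0) →
      (∀ i, v i = 0 → z₂ i = 0) → A *ᵥ z₁ = A *ᵥ z₂ → z₁ = z₂) :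
    (∀ z : Fin n → ℝ, A *ᵥ z = A *ᵥ v → l1norm v ≤ l1norm z) ∧
    (∀ z : Fin n → ℝ, A *ᵥ z = A *ᵥ v → l1norm z ≤ l1norm v → z = v) := by
  obtain ⟨w, hw1, hw2⟩ := hsource
  set u : Fin n → ℝ := Aᵀ *ᵥ w with hu
  have habs : ∀ i, |u i| ≤ 1 := by
    intro i
    by_cases h : v i = 0
    · exact le_of_lt (hw2 i h)
    · rw [hw1 i h]
      rcases lt_trichotomy (v i) 0 with h' | h' | h'
      · rw [Real.sign_of_neg h']; norm_num
      · exact absurd h' h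
      · rw [Real.sign_of_pos h']; norm_num
  have hswap : ∀ z : Fin n → ℝ, u ⬝ᵥ z = w ⬝ᵥ (A *ᵥ z) := by
    intro z
    rw [hu, Matrix.mulVec_transpose, ← Matrix.dotProduct_mulVec]
  have huv : u ⬝ᵥ v = l1norm v := by
    unfold l1norm dotProduct
    refine Finset.sum_congr rfl fun i _ => ?_
    by_cases h : v i = 0
    · simp [h]
    · rw [hw1 i h]
      rcases lt_trichotomy (v i) 0 with h' | h' | h'
      · rw [Real.sign_of_neg h', abs_of_neg h']; ring
      · exact absurd h' h
      · rw [Real.sign_of_pos h', abs_of_pos h']; ring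
  have key : ∀ z : Fin n → ℝ, A *ᵥ z = A *ᵥ v → u ⬝ᵥ z = l1norm v := by
    intro z hz
    rw [hswap, hz, ← hswap, huv]
  have hle : ∀ z : Fin n → ℝ, u ⬝ᵥ z ≤ l1norm z := by
    intro z
    unfold dotProduct l1norm
    refine Finset.sum_le_sum fun i _ => ?_
    calc u i * z i ≤ |u i * z i| := le_abs_self _
      _ = |u i| * |z i| := abs_mul _ _
      _ ≤ 1 * |z i| := by
          exact mul_le_mul_of_nonneg_right (habs i) (abs_nonneg _)
      _ = |z i| := one_mul _
  constructor
  · intro z hz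
    rw [← key z hz]
    exact hle z
  · intro z hz hlz
    -- equality case: ∑ |z i| = u ⬝ᵥ z
    have heq : l1norm z = u ⬝ᵥ z := by
      have h1 := key z hz
      have h2 := hle z
      linarith
    -- each term: |z i| = u i * z i
    have hterm : ∀ i, |z i| = u i * z i := by
      have hsum : ∑ i, (|z i| - u i * z i) = 0 := by
        unfold l1norm dotProduct at heq
        rw [Finset.sum_sub_distrib]
        linarith
      have hnn : ∀ i ∈ Finset.univ, (0:ℝ) ≤ |z i| - u i * z i := by
        intro i _
        have : u i * z i ≤ |z i| := by
          calc u i * z i ≤ |u i * z i| := le_abs_self _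
            _ = |u i| * |z i| := abs_mul _ _
            _ ≤ 1 * |z i| := mul_le_mul_of_nonneg_right (habs i) (abs_nonneg _)
            _ = |z i| := one_mul _
        linarith
      intro i
      have := (Finset.sum_eq_zero_iff_of_nonneg hnn).mp hsum i (Finset.mem_univ i)
      linarith
    have hz0 : ∀ i, v i = 0 → z i = 0 := by
      intro i hvi
      by_contra hzi
      have h1 : |u i| < 1 := hw2 i hvi
      have h2 : u i * z i ≤ |u i| * |z i| := by
        calc u i * z i ≤ |u i * z i| := le_abs_self _
          _ = |u i| * |z i| := abs_mul _ _
      have h3 : |u i| * |z i| < 1 * |z i| :=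
        mul_lt_mul_of_pos_right h1 (abs_pos.mpr hzi)
      have := hterm i
      linarith [one_mul |z i|]
    exact hinj z v hz0 (fun i h => h) hz
end

section
/- Let A ∈ ℝ^{m×n} satisfy the restricted isometry property of order 2s with constant δ < 1/√2, i.e., (1−δ)‖z‖₂² ≤ ‖Az‖₂² ≤ (1+δ)‖z‖₂² holds for all 2s-sparse z ∈ ℝⁿ. Then every s-sparse vector v ∈ ℝⁿ is the unique minimizer of ‖z‖₁ over all z ∈ ℝⁿ satisfying Az = Av. -/
open Matrix

/-- `z` has at most `s` nonzero entries. -/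
def IsSparse {n : ℕ} (s : ℕ) (z : Fin n → ℝ) : Prop :=
  ∃ T : Finset (Fin n), T.card ≤ s ∧ ∀ i ∉ T, z i = 0

/-!
The restricted isometry property with `δ < 1/√2` implies the null space property
`‖h_S‖₁ < ‖h_Sᶜ‖₁` for `h ∈ ker A`, `#S ≤ s`, which gives ℓ¹ uniqueness by the triangle
inequality. For the null space property we follow Cai and Zhang. Let `x` be `h` on a set `T`
of its `s` largest entries. If the property fails, `w = h - x` lies in the polytope
`‖w‖_∞ ≤ α`, `‖w‖₁ ≤ s α` with `α = ‖x‖₁ / s`, whose extreme points are `s`-sparse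
(at most one coordinate of an extreme point has modulus strictly between `0` and `α`).
For `s`-sparse `u` in this polytope, the RIP applied to `x + t u` and `u - t x` gives an
inequality in which `‖A u‖²` cancels, so it is affine in `u`; by Krein–Milman it then also
holds at `u = w`, where `A w = -A x`. With `t = √2 - 1` this contradicts `δ < 1/√2`.
-/

open Finset

namespace IsSparse

variable {n s t : ℕ} {x y : Fin n → ℝ}

theorem add (hx : IsSparse s x) (hy : IsSparse t y) : IsSparse (s + t) (x + y) := by
  obtain ⟨S, hS, hxS⟩ := hx
  obtain ⟨T, hT, hyT⟩ := hy
  refine ⟨S ∪ T, (card_union_le S T).trans (add_le_add hS hT), fun i hi => ?_⟩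
  rw [mem_union, not_or] at hi
  simp [hxS i hi.1, hyT i hi.2]

theorem smul (c : ℝ) (hx : IsSparse s x) : IsSparse s (c • x) := by
  obtain ⟨S, hS, hxS⟩ := hx
  exact ⟨S, hS, fun i hi => by simp [hxS i hi]⟩

theorem dotProduct_self_le {α : ℝ} (hx : IsSparse s x) (hα : ∀ i, |x i| ≤ α) :
    x ⬝ᵥ x ≤ s * α ^ 2 := by
  obtain ⟨S, hS, hxS⟩ := hx
  calc x ⬝ᵥ x = ∑ i ∈ S, x i ^ 2 := by
        rw [dotProduct, ← sum_subset (subset_univ S) fun i _ hi => by simp [hxS i hi]]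
        simp only [sq]
    _ ≤ ∑ _i ∈ S, α ^ 2 :=
        sum_le_sum fun i _ => sq_le_sq' (abs_le.1 (hα i)).1 (abs_le.1 (hα i)).2
    _ ≤ s * α ^ 2 := by
        rw [sum_const, nsmul_eq_mul]
        exact mul_le_mul_of_nonneg_right (by exact_mod_cast hS) (sq_nonneg α)

end IsSparse

theorem isSparse_of_card_partial_le_one {n s : ℕ} {v : Fin n → ℝ} {α : ℝ}
    (hbd : ∀ j, |v j| ≤ α) (hl1 : l1norm v ≤ s * α)
    (hpartial : #{j | 0 < |v j| ∧ |v j| < α} ≤ 1) : IsSparse s v := by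
  refine ⟨({j | v j ≠ 0} : Finset (Fin n)), ?_, fun i hi => by simpa using hi⟩
  rcases le_or_gt α 0 with hα | hα
  · have hv : ∀ j, v j = 0 := fun j => abs_nonpos_iff.1 ((hbd j).trans hα)
    simp [hv]
  set F : Finset (Fin n) := {j | |v j| = α}
  set P : Finset (Fin n) := {j | 0 < |v j| ∧ |v j| < α}
  have hsupp : ({j | v j ≠ 0} : Finset (Fin n)) ⊆ F ∪ P := by
    intro j hj
    simp only [mem_filter, mem_univ, true_and, F, P, mem_union] at hj ⊢
    exact (hbd j).eq_or_lt.imp id fun h => ⟨abs_pos.2 hj, h⟩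
  have hFP : #F * α + ∑ j ∈ P, |v j| ≤ s * α := by
    have hdisj : Disjoint F P := disjoint_filter.2 fun j _ hF hP => hP.2.ne hF
    calc #F * α + ∑ j ∈ P, |v j| = ∑ j ∈ F ∪ P, |v j| := by
          rw [sum_union hdisj, sum_congr rfl fun j hj => (mem_filter.1 hj).2, sum_const,
            nsmul_eq_mul]
      _ ≤ l1norm v := sum_le_sum_of_subset_of_nonneg (subset_univ _) fun j _ _ => abs_nonneg _
      _ ≤ s * α := hl1
  have hcard : #F + #P ≤ s := by
    rcases P.eq_empty_or_nonempty with hP | hP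
    · rw [hP, sum_empty, add_zero] at hFP
      simpa [hP] using (le_of_mul_le_mul_right hFP hα : (#F : ℝ) ≤ s)
    · have : 0 < ∑ j ∈ P, |v j| := sum_pos (fun j hj => (mem_filter.1 hj).2.1) hP
      have : (#F : ℝ) < s := lt_of_mul_lt_mul_right (by linarith) hα.le
      have : #F < s := by exact_mod_cast this
      omega
  exact (card_le_card hsupp).trans ((card_union_le F P).trans hcard)

theorem abs_add_mul_sign {a b : ℝ} (h : |b| ≤ |a|) : |a + b * Real.sign a| = |a| + b := by
  rcases lt_trichotomy a 0 with ha | rfl | ha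
  · rw [Real.sign_of_neg ha, abs_of_neg ha,
      abs_of_nonpos (by linarith [neg_abs_le b, abs_of_neg ha])]
    ring
  · simp_all
  · rw [Real.sign_of_pos ha, abs_of_pos ha,
      abs_of_nonneg (by linarith [neg_abs_le b, abs_of_pos ha])]
    ring

/-- The polytope `T(α, s) = {u : ‖u‖_∞ ≤ α, ‖u‖₁ ≤ s α}` of Cai and Zhang, cut down to the
vectors vanishing on `T`. -/
def caiZhangPolytope {n : ℕ} (s : ℕ) (α : ℝ) (T : Finset (Fin n)) : Set (Fin n → ℝ) :=
  {u | (∀ j, |u j| ≤ α) ∧ l1norm u ≤ s * α ∧ ∀ j ∈ T, u j = 0}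

section caiZhangPolytope

variable {n s : ℕ} {α : ℝ} {T : Finset (Fin n)}

theorem isCompact_caiZhangPolytope : IsCompact (caiZhangPolytope s α T) := by
  have hclosed : IsClosed (caiZhangPolytope s α T) := by
    simp only [caiZhangPolytope, Set.ofPred_and, Set.ofPred_forall]
    refine .inter (isClosed_iInter fun j => ?_) (.inter ?_ (isClosed_biInter fun j _ => ?_))
    · exact isClosed_le (by fun_prop) continuous_const
    · exact isClosed_le (by unfold l1norm; fun_prop) continuous_const
    · exact isClosed_eq (by fun_prop) continuous_const
  refine (isCompact_univ_pi fun _ => isCompact_Icc (a := -α) (b := α)).of_isClosed_subset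
    hclosed ?_
  exact fun u hu j _ => abs_le.1 (hu.1 j)

theorem convex_caiZhangPolytope : Convex ℝ (caiZhangPolytope s α T) := by
  intro u hu v hv a b ha hb hab
  have habs : ∀ j, |(a • u + b • v) j| ≤ a * |u j| + b * |v j| := fun j => by
    simpa [abs_mul, abs_of_nonneg ha, abs_of_nonneg hb] using abs_add_le (a * u j) (b * v j)
  refine ⟨fun j => ?_, ?_, fun j hj => by simp [hu.2.2 j hj, hv.2.2 j hj]⟩
  · calc _ ≤ a * |u j| + b * |v j| := habs j
      _ ≤ a * α + b * α := by gcongr; exacts [hu.1 j, hv.1 j]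
      _ = α := by rw [← add_mul, hab, one_mul]
  · calc l1norm (a • u + b • v) ≤ a * l1norm u + b * l1norm v := by
          unfold l1norm
          rw [mul_sum, mul_sum, ← sum_add_distrib]
          exact sum_le_sum fun j _ => habs j
      _ ≤ a * (s * α) + b * (s * α) := by gcongr; exacts [hu.2.1, hv.2.1]
      _ = s * α := by rw [← add_mul, hab, one_mul]

theorem add_mul_sign_mem_caiZhangPolytope {v e : Fin n → ℝ} (hv : v ∈ caiZhangPolytope s α T)
    (he : ∑ j, e j = 0) (hle : ∀ j, |e j| ≤ |v j|) (hbd : ∀ j, |v j| + e j ≤ α) :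
    (fun j => v j + e j * Real.sign (v j)) ∈ caiZhangPolytope s α T := by
  have habs : ∀ j, |v j + e j * Real.sign (v j)| = |v j| + e j :=
    fun j => abs_add_mul_sign (hle j)
  refine ⟨fun j => (habs j).trans_le (hbd j), ?_, fun j hj => by simp [hv.2.2 j hj]⟩
  simpa [l1norm, habs, sum_add_distrib, he] using hv.2.1

theorem isSparse_of_mem_extremePoints_caiZhangPolytope {v : Fin n → ℝ}
    (hv : v ∈ (caiZhangPolytope s α T).extremePoints ℝ) : IsSparse s v := by
  obtain ⟨hvK, hext⟩ := hv
  refine isSparse_of_card_partial_le_one hvK.1 hvK.2.1 ?_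
  by_contra! hcard
  obtain ⟨j₁, hj₁, j₂, hj₂, hne⟩ := one_lt_card.1 hcard
  simp only [mem_filter, mem_univ, true_and] at hj₁ hj₂
  -- move mass `τ` from coordinate `j₂` to `j₁`, keeping the signs
  set ε := min (min |v j₁| (α - |v j₁|)) (min |v j₂| (α - |v j₂|))
  have hε : 0 < ε := lt_min (lt_min hj₁.1 (by linarith)) (lt_min hj₂.1 (by linarith))
  set e : Fin n → ℝ := Pi.single j₁ 1 - Pi.single j₂ 1
  have he₁ : e j₁ = 1 := by simp [e, hne]
  have he₂ : e j₂ = -1 := by simp [e, Ne.symm hne]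
  have he₀ : ∀ j, j ≠ j₁ → j ≠ j₂ → e j = 0 := fun j h₁ h₂ => by simp [e, h₁, h₂]
  have hmem : ∀ τ, |τ| ≤ ε →
      (fun j => v j + τ * e j * Real.sign (v j)) ∈ caiZhangPolytope s α T := by
    intro τ hτ
    obtain ⟨h₁, h₂⟩ := le_min_iff.1 hτ
    rw [le_min_iff] at h₁ h₂
    have hcoord : ∀ j, |τ * e j| ≤ |v j| ∧ |v j| + τ * e j ≤ α := by
      intro j
      by_cases hj₁ : j = j₁
      · rw [hj₁, he₁, mul_one]
        exact ⟨h₁.1, by linarith [le_abs_self τ]⟩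
      by_cases hj₂ : j = j₂
      · rw [hj₂, he₂, mul_neg_one, abs_neg]
        exact ⟨h₂.1, by linarith [neg_abs_le τ]⟩
      · rw [he₀ j hj₁ hj₂, mul_zero, abs_zero, add_zero]
        exact ⟨abs_nonneg _, hvK.1 j⟩
    refine add_mul_sign_mem_caiZhangPolytope hvK ?_ (fun j => (hcoord j).1)
      (fun j => (hcoord j).2)
    simp [e, ← mul_sum, sum_sub_distrib]
  have hv := hext (hmem ε (abs_of_pos hε).le) (hmem (-ε) (by rw [abs_neg, abs_of_pos hε]))
    ⟨1 / 2, 1 / 2, by norm_num, by norm_num, by norm_num, by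
      ext j; simp only [Pi.add_apply, Pi.smul_apply, smul_eq_mul]; ring⟩
  have hv₁ := congrFun hv j₁
  rw [he₁, mul_one, add_eq_left, mul_eq_zero, Real.sign_eq_zero_iff] at hv₁
  exact hv₁.elim hε.ne' (abs_pos.1 hj₁.1)

/-- The sparse representation of Cai and Zhang, in dual form: by Krein–Milman the
polytope is the closed convex hull of its extreme points, which are `s`-sparse. -/
theorem caiZhangPolytope_subset_of_isSparse {H : Set (Fin n → ℝ)} (hHc : IsClosed H)
    (hH : Convex ℝ H) (hsub : ∀ u ∈ caiZhangPolytope s α T, IsSparse s u → u ∈ H) :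
    caiZhangPolytope s α T ⊆ H := by
  rw [← closure_convexHull_extremePoints isCompact_caiZhangPolytope convex_caiZhangPolytope]
  refine closure_minimal (convexHull_min (fun u hu => ?_) hH) hHc
  exact hsub u (extremePoints_subset hu) (isSparse_of_mem_extremePoints_caiZhangPolytope hu)

end caiZhangPolytope

theorem exists_finset_card_le_sum_max {ι : Type*} [Fintype ι] [DecidableEq ι] (s : ℕ)
    {f : ι → ℝ} (hf : ∀ i, 0 ≤ f i) :
    ∃ T : Finset ι, #T ≤ s ∧ (∀ S : Finset ι, #S ≤ s → ∑ i ∈ S, f i ≤ ∑ i ∈ T, f i) ∧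
      ∀ i ∉ T, s * f i ≤ ∑ j ∈ T, f j := by
  obtain ⟨T, hT, hTmax⟩ :=
    exists_max_image ({S | #S ≤ s} : Finset (Finset ι)) (∑ i ∈ ·, f i) ⟨∅, by simp⟩
  rw [mem_filter] at hT
  refine ⟨T, hT.2, fun S hS => hTmax S (by simpa using hS), fun i hi => ?_⟩
  rcases hT.2.lt_or_eq with hlt | heq
  · have := hTmax (insert i T) (mem_filter.2 ⟨mem_univ _, by
      rw [card_insert_of_notMem hi]; omega⟩)
    rw [sum_insert hi] at this
    have : f i = 0 := le_antisymm (by linarith) (hf i)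
    simpa [this] using sum_nonneg fun j _ => hf j
  · rw [← heq, ← nsmul_eq_mul]
    refine card_nsmul_le_sum T f (f i) fun j hj => ?_
    have hij : i ∉ T.erase j := fun h => hi (mem_of_mem_erase h)
    have hTpos := card_pos.2 ⟨j, hj⟩
    have := hTmax (insert i (T.erase j)) (mem_filter.2 ⟨mem_univ _, by
      rw [card_insert_of_notMem hij, card_erase_of_mem hj]; omega⟩)
    rw [sum_insert hij, ← add_sum_erase T f hj] at this
    linarith

theorem exists_sub_mem_caiZhangPolytope {n s : ℕ} {h : Fin n → ℝ} (hne : h ≠ 0)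
    {S : Finset (Fin n)} (hS : #S ≤ s) (hSc : ∑ i ∈ Sᶜ, |h i| ≤ ∑ i ∈ S, |h i|) :
    ∃ (T : Finset (Fin n)) (α : ℝ) (x : Fin n → ℝ), #T ≤ s ∧ (∀ i ∉ T, x i = 0) ∧
      0 < s * α ^ 2 ∧ s * α ^ 2 ≤ x ⬝ᵥ x ∧ h - x ∈ caiZhangPolytope s α T := by
  obtain ⟨T, hTs, hTmax, hTbig⟩ := exists_finset_card_le_sum_max s fun i => abs_nonneg (h i)
  set M := ∑ i ∈ T, |h i|
  have htotal (U : Finset (Fin n)) : ∑ i ∈ U, |h i| + ∑ i ∈ Uᶜ, |h i| = l1norm h :=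
    sum_add_sum_compl U _
  have hM : 0 < M := by
    obtain ⟨j, hj⟩ := Function.ne_iff.1 hne
    have : 0 < l1norm h := sum_pos' (fun i _ => abs_nonneg _) ⟨j, mem_univ _, abs_pos.2 hj⟩
    linarith [htotal S, htotal T, hTmax S hS]
  have hs : (0 : ℝ) < s := by
    exact_mod_cast (card_pos.2 (nonempty_of_sum_ne_zero hM.ne')).trans_le hTs
  set x : Fin n → ℝ := fun i => if i ∈ T then h i else 0
  refine ⟨T, M / s, x, hTs, fun i hi => if_neg hi, by positivity, ?_, ?_, ?_, ?_⟩
  · have hxx : x ⬝ᵥ x = ∑ i ∈ T, |h i| ^ 2 := by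
      rw [dotProduct, ← sum_subset (subset_univ T) fun i _ hi => by simp [x, hi]]
      exact sum_congr rfl fun i hi => by simp [x, hi, sq]
    have hCS : M ^ 2 ≤ s * ∑ i ∈ T, |h i| ^ 2 :=
      sq_sum_le_card_mul_sum_sq.trans (by gcongr)
    rw [hxx, div_pow, mul_div_assoc', sq (s : ℝ), mul_div_mul_left _ _ hs.ne', div_le_iff₀ hs]
    linarith
  · intro j
    by_cases hj : j ∈ T
    · simp only [Pi.sub_apply, x, hj, if_true, sub_self, abs_zero]
      positivity
    · simpa [x, hj, le_div_iff₀ hs, mul_comm] using hTbig j hj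
  · have hx : ∀ i ∈ Tᶜ, |(h - x) i| = |h i| := fun i hi => by simp [x, mem_compl.1 hi]
    rw [mul_div_cancel₀ _ hs.ne', l1norm, ← sum_add_sum_compl T, sum_congr rfl hx,
      sum_eq_zero fun i hi => by simp [x, hi], zero_add]
    linarith [htotal S, htotal T, hTmax S hS]
  · intro j hj
    simp [x, hj]

theorem sum_sq_eq_dotProduct_self {ι : Type*} [Fintype ι] (z : ι → ℝ) :
    ∑ i, z i ^ 2 = z ⬝ᵥ z := by
  simp only [dotProduct, sq]

def HasRIP {m n : ℕ} (A : Matrix (Fin m) (Fin n) ℝ) (k : ℕ) (δ : ℝ) : Prop :=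
  ∀ z : Fin n → ℝ, IsSparse k z →
    (1 - δ) * ∑ i, z i ^ 2 ≤ ∑ i, (A *ᵥ z) i ^ 2 ∧ ∑ i, (A *ᵥ z) i ^ 2 ≤ (1 + δ) * ∑ i, z i ^ 2

def NullSpaceProperty {m n : ℕ} (A : Matrix (Fin m) (Fin n) ℝ) (s : ℕ) : Prop :=
  ∀ h : Fin n → ℝ, A *ᵥ h = 0 → h ≠ 0 →
    ∀ S : Finset (Fin n), #S ≤ s → ∑ i ∈ S, |h i| < ∑ i ∈ Sᶜ, |h i|

namespace HasRIP

variable {m n s k : ℕ} {A : Matrix (Fin m) (Fin n) ℝ} {δ : ℝ}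

theorem mono (hA : HasRIP A k δ) {δ' : ℝ} (hδ : δ ≤ δ') : HasRIP A k δ' := by
  intro z hz
  have hz2 : 0 ≤ ∑ i, z i ^ 2 := sum_nonneg fun i _ => sq_nonneg (z i)
  obtain ⟨hlow, hup⟩ := hA z hz
  constructor <;> nlinarith

/-- The lower RIP bound at `x + t u` plus `t²` times the upper one at `u - t x`:
the terms `t² ‖A u‖²` cancel. -/
theorem le_mulVec_dotProduct (hA : HasRIP A (2 * s) δ) (hδ : 0 ≤ δ) {x u : Fin n → ℝ}
    (hx : IsSparse s x) (hu : IsSparse s u) (hxu : x ⬝ᵥ u = 0) (hux : u ⬝ᵥ u ≤ x ⬝ᵥ x)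
    (t : ℝ) :
    (x ⬝ᵥ x) * (1 - t ^ 4 - δ * (1 + t ^ 2) ^ 2) ≤
      (1 - t ^ 4) * (A *ᵥ x ⬝ᵥ A *ᵥ x) + 2 * t * (1 + t ^ 2) * (A *ᵥ x ⬝ᵥ A *ᵥ u) := by
  have hp := (hA (x + t • u) (two_mul s ▸ hx.add (hu.smul t))).1
  have hq := (hA (u + (-t) • x) (two_mul s ▸ hu.add (hx.smul (-t)))).2
  simp only [sum_sq_eq_dotProduct_self, mulVec_add, mulVec_smul, add_dotProduct, dotProduct_add,
    smul_dotProduct, dotProduct_smul, smul_eq_mul, dotProduct_comm u x,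
    dotProduct_comm (A *ᵥ u) (A *ᵥ x), hxu] at hp hq
  nlinarith [mul_nonneg (mul_nonneg hδ (sq_nonneg t)) (sub_nonneg.2 hux)]

theorem le_mulVec_dotProduct_of_mem_caiZhangPolytope (hA : HasRIP A (2 * s) δ) (hδ : 0 ≤ δ)
    {x : Fin n → ℝ} {T : Finset (Fin n)} {α : ℝ} (hT : #T ≤ s) (hxT : ∀ i ∉ T, x i = 0)
    (hα : s * α ^ 2 ≤ x ⬝ᵥ x) (t : ℝ) {w : Fin n → ℝ} (hw : w ∈ caiZhangPolytope s α T) :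
    (x ⬝ᵥ x) * (1 - t ^ 4 - δ * (1 + t ^ 2) ^ 2) ≤
      (1 - t ^ 4) * (A *ᵥ x ⬝ᵥ A *ᵥ x) + 2 * t * (1 + t ^ 2) * (A *ᵥ x ⬝ᵥ A *ᵥ w) := by
  set c := (x ⬝ᵥ x) * (1 - t ^ 4 - δ * (1 + t ^ 2) ^ 2) - (1 - t ^ 4) * (A *ᵥ x ⬝ᵥ A *ᵥ x)
  have hlin : IsLinearMap ℝ fun u => 2 * t * (1 + t ^ 2) * (A *ᵥ x ⬝ᵥ A *ᵥ u) :=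
    ⟨fun u v => by rw [mulVec_add, dotProduct_add, mul_add],
      fun a u => by rw [mulVec_smul, dotProduct_smul, smul_eq_mul, smul_eq_mul]; ring⟩
  have hH : caiZhangPolytope s α T ⊆ {u | c ≤ 2 * t * (1 + t ^ 2) * (A *ᵥ x ⬝ᵥ A *ᵥ u)} := by
    refine caiZhangPolytope_subset_of_isSparse (isClosed_le continuous_const (by fun_prop))
      (convex_halfSpace_ge hlin c) fun u hu hsu => ?_
    have hxu : x ⬝ᵥ u = 0 := sum_eq_zero fun i _ => by
      by_cases hi : i ∈ T
      · simp [hu.2.2 i hi]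
      · simp [hxT i hi]
    have := hA.le_mulVec_dotProduct hδ ⟨T, hT, hxT⟩ hsu hxu
      ((hsu.dotProduct_self_le hu.1).trans hα) t
    show c ≤ _
    linarith
  have : c ≤ _ := hH hw
  linarith

theorem nullSpaceProperty (hA : HasRIP A (2 * s) δ) (hδ : δ < 1 / √2) :
    NullSpaceProperty A s := by
  wlog hδ0 : 0 ≤ δ generalizing δ
  · exact this (hA.mono (le_max_left δ 0)) (max_lt hδ (by positivity)) (le_max_right δ 0)
  intro h hAh hne S hS
  by_contra! hSc
  obtain ⟨T, α, x, hTs, hxT, hα, hxx, hw⟩ := exists_sub_mem_caiZhangPolytope hne hS hSc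
  set t := √2 - 1 with htdef
  have key := hA.le_mulVec_dotProduct_of_mem_caiZhangPolytope hδ0 hTs hxT hxx t hw
  rw [mulVec_sub, hAh, zero_sub, dotProduct_neg] at key
  have ht : t ^ 2 + 2 * t = 1 := by linear_combination Real.sq_sqrt zero_le_two
  have hκ : 0 < 1 - t ^ 4 - δ * (1 + t ^ 2) ^ 2 := by
    have hδ' : 0 < 1 - √2 * δ := by
      rw [lt_div_iff₀' (by positivity)] at hδ
      linarith
    have ht0 : 0 < t := sub_pos.2 Real.one_lt_sqrt_two
    rw [show 1 - t ^ 4 - δ * (1 + t ^ 2) ^ 2 = 2 * (1 + t ^ 2) * t * (1 - √2 * δ) by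
      linear_combination (1 + t ^ 2) * (δ - 1) * ht + 2 * (1 + t ^ 2) * t * δ * htdef]
    positivity
  have hcancel : (1 - t ^ 4) * (A *ᵥ x ⬝ᵥ A *ᵥ x) +
      2 * t * (1 + t ^ 2) * -(A *ᵥ x ⬝ᵥ A *ᵥ x) = 0 := by
    linear_combination (-(1 + t ^ 2) * (A *ᵥ x ⬝ᵥ A *ᵥ x)) * ht
  linarith [mul_pos (hα.trans_le hxx) hκ]

end HasRIP

theorem NullSpaceProperty.l1norm_lt {m n s : ℕ} {A : Matrix (Fin m) (Fin n) ℝ}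
    (hA : NullSpaceProperty A s) {v z : Fin n → ℝ} (hv : IsSparse s v)
    (hz : A *ᵥ z = A *ᵥ v) (hzv : z ≠ v) : l1norm v < l1norm z := by
  obtain ⟨S, hS, hvS⟩ := hv
  have hnsp := hA (z - v) (by rw [mulVec_sub, hz, sub_self]) (sub_ne_zero.2 hzv) S hS
  have hv : l1norm v = ∑ i ∈ S, |v i| := by
    rw [l1norm, ← sum_add_sum_compl S,
      sum_eq_zero (s := Sᶜ) fun i hi => by simp [hvS i (mem_compl.1 hi)], add_zero]
  have hin : ∀ i ∈ S, |v i| - |(z - v) i| ≤ |z i| := fun i _ => by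
    rw [Pi.sub_apply, abs_sub_comm]
    linarith [abs_sub_abs_le_abs_sub (v i) (z i)]
  have hout : ∀ i ∈ Sᶜ, |(z - v) i| = |z i| := fun i hi => by simp [hvS i (mem_compl.1 hi)]
  rw [hv, l1norm, ← sum_add_sum_compl S, ← sum_congr rfl hout]
  linarith [sum_le_sum hin, sum_sub_distrib (s := S) (f := fun i => |v i|)
    (g := fun i => |(z - v) i|)]

/-- If `A` satisfies the RIP of order `2s` with constant `δ < 1/√2`, then every `s`-sparse
vector `v` is the unique minimizer of the ℓ¹ norm among all `z` with `A z = A v`. -/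
theorem stmt2 {m n : ℕ} (s : ℕ) (A : Matrix (Fin m) (Fin n) ℝ) (δ : ℝ)
    (hδ : δ < 1 / Real.sqrt 2)
    (hRIP : ∀ z : Fin n → ℝ, IsSparse (2 * s) z →
      (1 - δ) * ∑ i, z i ^ 2 ≤ ∑ i, (A *ᵥ z) i ^ 2 ∧
      ∑ i, (A *ᵥ z) i ^ 2 ≤ (1 + δ) * ∑ i, z i ^ 2) :
    ∀ v : Fin n → ℝ, IsSparse s v →
      (∀ z : Fin n → ℝ, A *ᵥ z = A *ᵥ v → l1norm v ≤ l1norm z) ∧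
      (∀ z : Fin n → ℝ, A *ᵥ z = A *ᵥ v → l1norm z ≤ l1norm v → z = v) := by
  have hnsp : NullSpaceProperty A s := HasRIP.nullSpaceProperty hRIP hδ
  intro v hv
  refine ⟨fun z hz => ?_, fun z hz hle => ?_⟩
  · rcases eq_or_ne z v with rfl | hzv
    · exact le_rfl
    · exact (hnsp.l1norm_lt hv hz hzv).le
  · by_contra hzv
    exact hle.not_gt (hnsp.l1norm_lt hv hz hzv)
end

section
/- Let A ∈ ℝ^{m×n}, λ > 0, and let R : ℝⁿ → [0,∞) be continuous and coercive (i.e., R(f) → ∞ as ‖f‖₂ → ∞). Let (g_k) be a sequence in ℝ^m converging to g ∈ ℝ^m, and for each k let f_k be a minimizer of f ↦ (1/2)‖Af − g_k‖₂² + (λ/2) R(f). Then (f_k) has a convergent subsequence, and the limit of every convergent subsequence of (f_k) is a minimizer of f ↦ (1/2)‖Af − g‖₂² + (λ/2) R(f). -/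
open Matrix Filter

lemma l2norm_continuous' {k : ℕ} : Continuous (l2norm (k := k)) :=
  Real.continuous_sqrt.comp (continuous_finset_sum _ fun i _ => (continuous_apply i).pow 2)

lemma norm_le_l2norm' {k : ℕ} (x : Fin k → ℝ) : ‖x‖ ≤ l2norm x := by
  unfold l2norm
  rw [pi_norm_le_iff_of_nonneg (Real.sqrt_nonneg _)]
  intro i
  rw [Real.norm_eq_abs, ← Real.sqrt_sq_eq_abs]
  exact Real.sqrt_le_sqrt (Finset.single_le_sum (fun j _ => sq_nonneg (x j)) (Finset.mem_univ i))

/-- The NETT functional. -/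
noncomputable def nettT {m n : ℕ} (A : Matrix (Fin m) (Fin n) ℝ) (lam : ℝ)
    (R : (Fin n → ℝ) → ℝ) (f : Fin n → ℝ) (g' : Fin m → ℝ) : ℝ :=
  (1 / 2) * l2norm (A *ᵥ f - g') ^ 2 + (lam / 2) * R f

lemma nettT_continuous {m n : ℕ} (A : Matrix (Fin m) (Fin n) ℝ) (lam : ℝ)
    (R : (Fin n → ℝ) → ℝ) (hRcont : Continuous R) :
    Continuous (fun p : (Fin n → ℝ) × (Fin m → ℝ) => nettT A lam R p.1 p.2) := by
  unfold nettT
  have hmv : Continuous fun f : Fin n → ℝ => A *ᵥ f :=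
    continuous_const.matrix_mulVec continuous_id
  exact (continuous_const.mul
      (((l2norm_continuous'.comp ((hmv.comp continuous_fst).sub continuous_snd)).pow 2))).add
    (continuous_const.mul (hRcont.comp continuous_fst))

lemma nettT_tendsto {m n : ℕ} (A : Matrix (Fin m) (Fin n) ℝ) (lam : ℝ)
    (R : (Fin n → ℝ) → ℝ) (hRcont : Continuous R)
    (fseq : ℕ → Fin n → ℝ) (gseq : ℕ → Fin m → ℝ) (f0 : Fin n → ℝ) (g0 : Fin m → ℝ)
    (hf : Tendsto fseq atTop (nhds f0)) (hg : Tendsto gseq atTop (nhds g0)) :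
    Tendsto (fun k => nettT A lam R (fseq k) (gseq k)) atTop (nhds (nettT A lam R f0 g0)) := by
  have := ((nettT_continuous A lam R hRcont).tendsto (f0, g0)).comp (hf.prodMk_nhds hg)
  exact this

/-- Stability of NETT regularization: if `g_k → g` and `f_k` minimizes the NETT functional
with data `g_k`, then `(f_k)` has a convergent subsequence and every subsequential limit
minimizes the NETT functional with data `g`. -/
theorem stmt9 {m n : ℕ} (A : Matrix (Fin m) (Fin n) ℝ) (lam : ℝ) (hlam : 0 < lam)
    (R : (Fin n → ℝ) → ℝ) (hRnonneg : ∀ f, 0 ≤ R f) (hRcont : Continuous R)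
    (hRcoercive : ∀ M : ℝ, ∃ K : ℝ, ∀ f : Fin n → ℝ, K ≤ l2norm f → M ≤ R f)
    (g : Fin m → ℝ) (gs : ℕ → Fin m → ℝ) (hgs : Tendsto gs atTop (nhds g))
    (fs : ℕ → Fin n → ℝ)
    (hfs : ∀ k : ℕ, ∀ f : Fin n → ℝ,
      (1 / 2) * l2norm (A *ᵥ fs k - gs k) ^ 2 + (lam / 2) * R (fs k) ≤
        (1 / 2) * l2norm (A *ᵥ f - gs k) ^ 2 + (lam / 2) * R f) :
    (∃ φ : ℕ → ℕ, StrictMono φ ∧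
      ∃ fstar : Fin n → ℝ, Tendsto (fs ∘ φ) atTop (nhds fstar)) ∧
    (∀ φ : ℕ → ℕ, StrictMono φ → ∀ fstar : Fin n → ℝ,
      Tendsto (fs ∘ φ) atTop (nhds fstar) →
      ∀ f : Fin n → ℝ,
        (1 / 2) * l2norm (A *ᵥ fstar - g) ^ 2 + (lam / 2) * R fstar ≤
          (1 / 2) * l2norm (A *ᵥ f - g) ^ 2 + (lam / 2) * R f) := by
  -- bound on T 0 (gs k)
  have hc : Tendsto (fun k => nettT A lam R 0 (gs k)) atTop (nhds (nettT A lam R 0 g)) :=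
    nettT_tendsto A lam R hRcont (fun _ => 0) gs 0 g tendsto_const_nhds hgs
  obtain ⟨C, hC⟩ := hc.bddAbove_range
  have hCub : ∀ k, nettT A lam R 0 (gs k) ≤ C := fun k => hC ⟨k, rfl⟩
  -- R (fs k) is bounded
  have hRb : ∀ k, R (fs k) ≤ 2 * C / lam := by
    intro k
    have h1 : (lam / 2) * R (fs k) ≤ C := by
      have h3 : (lam / 2) * R (fs k) ≤ nettT A lam R (fs k) (gs k) := by
        unfold nettT
        nlinarith [sq_nonneg (l2norm (A *ᵥ fs k - gs k))]
      exact h3.trans ((hfs k 0).trans (hCub k))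
    rw [le_div_iff₀ hlam]
    linarith
  obtain ⟨K, hK⟩ := hRcoercive (2 * C / lam + 1)
  have hl2 : ∀ k, l2norm (fs k) < K := by
    intro k
    by_contra h
    push_neg at h
    have := hK (fs k) h
    linarith [hRb k]
  have hball : ∀ k, fs k ∈ Metric.closedBall (0 : Fin n → ℝ) K := by
    intro k
    rw [Metric.mem_closedBall, dist_zero_right]
    exact (norm_le_l2norm' (fs k)).trans (hl2 k).le
  obtain ⟨fstar, -, φ, hφ, hlim⟩ :=
    (isCompact_closedBall (0 : Fin n → ℝ) K).tendsto_subseq hball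
  constructor
  · exact ⟨φ, hφ, fstar, hlim⟩
  · intro φ hφ fstar hlim f
    have hg' : Tendsto (fun j => gs (φ j)) atTop (nhds g) := hgs.comp hφ.tendsto_atTop
    have h1 : Tendsto (fun j => nettT A lam R (fs (φ j)) (gs (φ j))) atTop
        (nhds (nettT A lam R fstar g)) :=
      nettT_tendsto A lam R hRcont (fun j => fs (φ j)) (fun j => gs (φ j)) fstar g hlim hg'
    have h2 : Tendsto (fun j => nettT A lam R f (gs (φ j))) atTop
        (nhds (nettT A lam R f g)) :=
      nettT_tendsto A lam R hRcont (fun _ => f) (fun j => gs (φ j)) f g tendsto_const_nhds hg'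
    exact le_of_tendsto_of_tendsto' h1 h2 (fun j => hfs (φ j) f)
end
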